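/- Let $\epsilon_0 \ge 2\sqrt{(2/T)\ln(4/\delta)}$ and $\epsilon = \epsilon_0 + 1/T$. The stochastic fallback agent (play PONE component $s_i$ while $R^{sto}_i(h_{t-1}) < \epsilon T - 1$, else switch permanently to fictitious play) is $(\delta,\epsilon,T)$-stochastically consistent against every opponent: with probability 1, $\frac{1}{T} R^{sto}_i(h_T) \le \epsilon$. -/

import Mathlib

open Finset

noncomputable def cumPay {N : ℕ} (G : Fin N → Fin N → ℝ) (opp : ℕ → Fin N)
    (t : ℕ) (a : Fin N) : ℝ :=
  ∑ r ∈ Finset.range t, G a (opp r)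

noncomputable def bestSet {N : ℕ} (G : Fin N → Fin N → ℝ) (opp : ℕ → Fin N)
    (t : ℕ) : Finset (Fin N) :=
  Finset.univ.filter (fun a => ∀ b : Fin N, cumPay G opp t b ≤ cumPay G opp t a)

/-- Fictitious play with uniform tie-breaking. -/
noncomputable def fp {N : ℕ} (G : Fin N → Fin N → ℝ) (opp : ℕ → Fin N)
    (t : ℕ) (a : Fin N) : ℝ :=
  if a ∈ bestSet G opp t then 1 / (bestSet G opp t).card else 0

noncomputable def mixedPay {N : ℕ} (G : Fin N → Fin N → ℝ) (s : Fin N → ℝ)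
    (b : Fin N) : ℝ :=
  ∑ a : Fin N, s a * G a b

/-- Stochastic regret after `t` stages of an agent playing mixed strategies `strat`,
relative to fictitious play, against realized opponent actions `opp`. -/
noncomputable def stochRegret {N : ℕ} (G : Fin N → Fin N → ℝ)
    (strat : ℕ → Fin N → ℝ) (opp : ℕ → Fin N) (t : ℕ) : ℝ :=
  ∑ r ∈ Finset.range t, (mixedPay G (fp G opp r) (opp r) - mixedPay G (strat r) (opp r))

/-! Every stage adds at most one unit of stochastic regret, since both the fictitious-play
payoff and the agent's payoff lie in `[0, 1]`, and a stage at which the agent follows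
fictitious play adds none. While the regret stays below `ε T - 1` it can therefore not
exceed `ε T` at the next stage, and once it reaches `ε T - 1` the agent switches to
fictitious play and the regret is frozen. -/

theorem le_of_step_le_one_of_frozen {R : ℕ → ℝ} {B : ℝ} (hB : 0 ≤ B) (h0 : R 0 = 0)
    (hstep : ∀ t, R (t + 1) ≤ R t + 1) (hfrozen : ∀ t, B - 1 ≤ R t → R (t + 1) = R t) :
    ∀ t, R t ≤ B
  | 0 => h0 ▸ hB
  | t + 1 => by
    by_cases hlow : R t < B - 1
    · linarith [hstep t]
    · rw [hfrozen t (not_lt.1 hlow)]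
      exact le_of_step_le_one_of_frozen hB h0 hstep hfrozen t

section

variable {N : ℕ} {G : Fin N → Fin N → ℝ}

theorem mixedPay_nonneg (hG : ∀ a b, 0 ≤ G a b) {s : Fin N → ℝ} (hs : ∀ a, 0 ≤ s a)
    (b : Fin N) : 0 ≤ mixedPay G s b :=
  sum_nonneg fun a _ => mul_nonneg (hs a) (hG a b)

theorem mixedPay_le_one (hG : ∀ a b, G a b ≤ 1) {s : Fin N → ℝ} (hs : ∀ a, 0 ≤ s a)
    (hs1 : ∑ a, s a ≤ 1) (b : Fin N) : mixedPay G s b ≤ 1 :=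
  calc mixedPay G s b ≤ ∑ a, s a := sum_le_sum fun a _ => mul_le_of_le_one_right (hs a) (hG a b)
    _ ≤ 1 := hs1

theorem fp_nonneg (opp : ℕ → Fin N) (t : ℕ) (a : Fin N) : 0 ≤ fp G opp t a := by
  unfold fp
  split <;> positivity

/-- With an empty best-response set (only possible for `N = 0`) the weights sum to `0`. -/
theorem sum_fp_le_one (opp : ℕ → Fin N) (t : ℕ) : ∑ a, fp G opp t a ≤ 1 := by
  unfold fp
  rw [sum_ite_mem, univ_inter, sum_const, nsmul_eq_mul, mul_one_div]
  exact div_self_le_one _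

variable {strat : ℕ → Fin N → ℝ} {opp : ℕ → Fin N}

theorem stochRegret_succ (t : ℕ) :
    stochRegret G strat opp (t + 1) = stochRegret G strat opp t +
      (mixedPay G (fp G opp t) (opp t) - mixedPay G (strat t) (opp t)) :=
  sum_range_succ _ t

theorem stochRegret_succ_le (hG : ∀ a b, G a b ∈ Set.Icc (0 : ℝ) 1)
    (hstrat : ∀ t a, 0 ≤ strat t a) (t : ℕ) :
    stochRegret G strat opp (t + 1) ≤ stochRegret G strat opp t + 1 := by
  have hfp := mixedPay_le_one (fun a b => (hG a b).2) (fp_nonneg (G := G) opp t)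
    (sum_fp_le_one opp t) (opp t)
  have hown := mixedPay_nonneg (fun a b => (hG a b).1) (hstrat t) (opp t)
  rw [stochRegret_succ]
  linarith

theorem stochRegret_succ_of_eq_fp {t : ℕ} (h : strat t = fp G opp t) :
    stochRegret G strat opp (t + 1) = stochRegret G strat opp t := by
  rw [stochRegret_succ, h, sub_self, add_zero]

end

theorem stochastic_fallback_consistent_general
    {N : ℕ} (G : Fin N → Fin N → ℝ)
    (hG : ∀ a b : Fin N, G a b ∈ Set.Icc (0 : ℝ) 1)
    (T : ℕ) {δ : ℝ}
    (ε₀ ε : ℝ) (hε₀ : 2 * Real.sqrt ((2 / T) * Real.log (4 / δ)) ≤ ε₀)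
    (hε : ε = ε₀ + 1 / T)
    (opp : ℕ → Fin N) (strat : ℕ → Fin N → ℝ)
    (hstrat : ∀ t, (∀ a, 0 ≤ strat t a) ∧ ∑ a : Fin N, strat t a = 1)
    (hfallback : ∀ t : ℕ, ε * T - 1 ≤ stochRegret G strat opp t → strat t = fp G opp t) :
    stochRegret G strat opp T / T ≤ ε := by
  have hε₀_nonneg : 0 ≤ ε₀ := (by positivity : (0 : ℝ) ≤ _).trans hε₀
  have hε_nonneg : 0 ≤ ε := hε ▸ add_nonneg hε₀_nonneg (by positivity)
  refine div_le_of_le_mul₀ (Nat.cast_nonneg T) hε_nonneg ?_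
  exact le_of_step_le_one_of_frozen (mul_nonneg hε_nonneg (Nat.cast_nonneg T)) (sum_range_zero _)
    (stochRegret_succ_le hG fun t => (hstrat t).1)
    (fun t hsw => stochRegret_succ_of_eq_fp (hfallback t hsw)) T

/-- the stochastic fallback agent — play the PONE component `si` while
its accumulated stochastic regret is below `ε T - 1`, and otherwise switch (permanently)
to fictitious play — is `(δ, ε, T)`-stochastically consistent against every opponent:
surely its average stochastic regret after `T` stages is at most `ε = ε₀ + 1/T`. -/
theorem stochastic_fallback_consistent
    {N : ℕ} (hN : 0 < N) (G : Fin N → Fin N → ℝ)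
    (hG : ∀ a b : Fin N, G a b ∈ Set.Icc (0 : ℝ) 1)
    (T : ℕ) (hT : 0 < T) {δ : ℝ} (hδ : δ ∈ Set.Ioo (0 : ℝ) 1)
    (ε₀ ε : ℝ) (hε₀ : 2 * Real.sqrt ((2 / T) * Real.log (4 / δ)) ≤ ε₀)
    (hε : ε = ε₀ + 1 / T)
    (si : Fin N → ℝ) (hsi : (∀ a, 0 ≤ si a) ∧ ∑ a : Fin N, si a = 1)
    (opp : ℕ → Fin N) (strat : ℕ → Fin N → ℝ)
    (hstrat : ∀ t, (∀ a, 0 ≤ strat t a) ∧ ∑ a : Fin N, strat t a = 1)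
    (hplay : ∀ t : ℕ, stochRegret G strat opp t < ε * T - 1 → strat t = si)
    (hfallback : ∀ t : ℕ, ε * T - 1 ≤ stochRegret G strat opp t → strat t = fp G opp t) :
    stochRegret G strat opp T / T ≤ ε :=
  stochastic_fallback_consistent_general G hG T ε₀ ε hε₀ hε opp strat hstrat hfallback
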